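/- Let U be a full-rank subgroup of O_K^× containing the roots of unity μ_K, let ℓ be a prime, and suppose that whenever u ∈ U is an ℓ-th power in K^× then u ∈ U^ℓ·μ_K. Then ℓ does not divide the index [O_K^× : U]. -/

import Mathlib

open NumberField NumberField.Units

/-!
By Cauchy's theorem in `𝓞_K^× ⧸ U`, if `ℓ ∣ [𝓞_K^× : U]` there is a unit `x ∉ U` with `x ^ ℓ ∈ U`.
Saturation writes `x ^ ℓ = z ^ ℓ * t` with `z ∈ U` and `t` a root of unity, so `x * z⁻¹` is a
root of unity, hence lies in `U`, and then so does `x`.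
-/

theorem Subgroup.exists_notMem_pow_mem_of_prime_dvd_index {G : Type*} [Group G]
    (H : Subgroup G) [H.Normal] [H.FiniteIndex] {p : ℕ} (hp : p.Prime) (hdvd : p ∣ H.index) :
    ∃ x ∉ H, x ^ p ∈ H := by
  have : Fact p.Prime := ⟨hp⟩
  obtain ⟨g, hg⟩ := exists_prime_orderOf_dvd_card' (G := G ⧸ H) p hdvd
  obtain ⟨x, rfl⟩ := QuotientGroup.mk_surjective g
  refine ⟨x, fun hx => hp.one_lt.ne' ?_, ?_⟩
  · rw [(QuotientGroup.eq_one_iff x).mpr hx, orderOf_one] at hg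
    exact hg.symm
  · rw [← QuotientGroup.eq_one_iff, QuotientGroup.mk_pow, ← hg, pow_orderOf_eq_one]

theorem CommGroup.mem_of_pow_eq_pow_mul_torsion {G : Type*} [CommGroup G] {U : Subgroup G}
    (hU : CommGroup.torsion G ≤ U) {n : ℕ} (hn : n ≠ 0) {x z t : G} (hz : z ∈ U)
    (ht : t ∈ CommGroup.torsion G) (hxzt : z ^ n * t = x ^ n) : x ∈ U := by
  have hquot : (x * z⁻¹) ^ n = t := by
    rw [mul_pow, inv_pow, ← hxzt, mul_inv_cancel_comm]
  have htors : x * z⁻¹ ∈ CommGroup.torsion G :=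
    IsOfFinOrder.of_pow (hquot ▸ ht) hn
  simpa using U.mul_mem (hU htors) hz

/-- Let `U` be a full-rank, finite-index subgroup of `𝓞_K^×` containing the roots of unity
`μ_K`, and let `ℓ` be a prime.  Suppose that whenever `u ∈ U` is an `ℓ`-th power in `K^×`
then `u ∈ U^ℓ·μ_K`.  Then `ℓ` does not divide the index `[𝓞_K^× : U]`. -/
theorem prime_not_dvd_index_of_saturated (K : Type*) [Field K] [NumberField K]
    (U : Subgroup (𝓞 K)ˣ) (hμ : torsion K ≤ U) (hfin : U.FiniteIndex)
    (ℓ : ℕ) (hℓ : ℓ.Prime)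
    (hsat : ∀ u ∈ U, (∃ b : K, b ^ ℓ = algebraMap (𝓞 K) K u) →
      ∃ z ∈ U, ∃ t ∈ torsion K, z ^ ℓ * t = u) :
    ¬ ℓ ∣ U.index := by
  intro hdvd
  obtain ⟨x, hxU, hxℓ⟩ := U.exists_notMem_pow_mem_of_prime_dvd_index hℓ hdvd
  obtain ⟨z, hz, t, ht, hzt⟩ := hsat (x ^ ℓ) hxℓ ⟨(x : 𝓞 K), by push_cast; rfl⟩
  exact hxU (CommGroup.mem_of_pow_eq_pow_mul_torsion hμ hℓ.ne_zero hz ht hzt)
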